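/- arXiv:2412.07428 — 3 statements merged into one kernel-verified Lean document; each statement's English description precedes it below -/
import Mathlib

section
/- The function g(x) = a*x / log2(1 + b*x) on x > 0 (with a, b > 0) is concave; equivalently its second derivative is nonpositive for all x > 0. -/
/-!
For `u > 1`, `(u - 1) / log u = ∫₀¹ u ^ s ds` is an average of the concave functions
`u ↦ u ^ s`, `0 ≤ s ≤ 1`, hence concave. Since `a x / log₂ (1 + b x)` is the positive multiple
`a log 2 / b` of this function at `u = 1 + b x`, it is concave as well.
-/

open Real Set MeasureTheory

theorem concaveOn_intervalIntegral {E : Type*} [AddCommGroup E] [Module ℝ E] {S : Set E}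
    {f : ℝ → E → ℝ} {a b : ℝ} (hab : a ≤ b) (hf : ∀ s ∈ Icc a b, ConcaveOn ℝ S (f s))
    (hint : ∀ x ∈ S, IntervalIntegrable (fun s => f s x) volume a b) :
    ConcaveOn ℝ S fun x => ∫ s in a..b, f s x := by
  have hS : Convex ℝ S := (hf a (left_mem_Icc.2 hab)).1
  refine ⟨hS, fun x hx y hy μ ν hμ hν hμν => ?_⟩
  have hcomb : IntervalIntegrable (fun s => μ * f s x + ν * f s y) volume a b :=
    ((hint x hx).const_mul μ).add ((hint y hy).const_mul ν)
  calc μ • (∫ s in a..b, f s x) + ν • ∫ s in a..b, f s y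
      = ∫ s in a..b, μ * f s x + ν * f s y := by
        rw [intervalIntegral.integral_add ((hint x hx).const_mul μ) ((hint y hy).const_mul ν),
          intervalIntegral.integral_const_mul, intervalIntegral.integral_const_mul, smul_eq_mul,
          smul_eq_mul]
    _ ≤ ∫ s in a..b, f s (μ • x + ν • y) :=
        intervalIntegral.integral_mono_on hab hcomb (hint _ (hS hx hy hμ hν hμν))
          fun s hs => (hf s hs).2 hx hy hμ hν hμν

theorem integral_const_rpow {u : ℝ} (hu : 0 < u) (hu₁ : u ≠ 1) (a b : ℝ) :
    ∫ s in a..b, u ^ s = (u ^ b - u ^ a) / log u := by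
  have hlog : log u ≠ 0 := log_ne_zero_of_pos_of_ne_one hu hu₁
  have hderiv (s : ℝ) : HasDerivAt (fun s => u ^ s / log u) (u ^ s) s := by
    simpa [hlog] using ((hasStrictDerivAt_const_rpow hu s).hasDerivAt.div_const (log u))
  rw [intervalIntegral.integral_eq_sub_of_hasDerivAt (fun s _ => hderiv s)
    ((continuous_const_rpow hu.ne').intervalIntegrable a b), sub_div]

-- Not on `Ioi 0`: the junk value `(1 - 1) / log 1 = 0` at `u = 1` breaks concavity.
theorem concaveOn_sub_one_div_log : ConcaveOn ℝ (Ioi 1) fun u => (u - 1) / log u := by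
  refine (concaveOn_intervalIntegral zero_le_one
    (fun s hs => (concaveOn_rpow hs.1 hs.2).subset (Ioi_subset_Ici zero_le_one) (convex_Ioi 1))
    fun u hu => (continuous_const_rpow (zero_lt_one.trans hu).ne').intervalIntegrable 0 1).congr
    fun u hu => ?_
  simp [integral_const_rpow (zero_lt_one.trans hu) (ne_of_gt hu)]

/-- The uplink energy function `g(x) = a x / log₂(1 + b x)` is concave on `x > 0`. -/
theorem energy_function_concave (a b : ℝ) (ha : 0 < a) (hb : 0 < b) :
    ConcaveOn ℝ (Set.Ioi (0 : ℝ)) (fun x => a * x / Real.logb 2 (1 + b * x)) := by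
  have hline (x : ℝ) : AffineMap.lineMap (1 : ℝ) (1 + b) x = 1 + b * x := by
    rw [AffineMap.lineMap_apply_ring']
    ring
  have hgt (x : ℝ) (hx : 0 < x) : 1 < 1 + b * x := lt_add_of_pos_right 1 (mul_pos hb hx)
  have hpre : Ioi (0 : ℝ) ⊆ AffineMap.lineMap (1 : ℝ) (1 + b) ⁻¹' Ioi 1 := fun x hx => by
    rw [mem_preimage, hline]
    exact hgt x hx
  refine (((concaveOn_sub_one_div_log.comp_affineMap _).subset hpre (convex_Ioi 0)).smul
    (c := a * log 2 / b) (by positivity)).congr fun x hx => ?_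
  have hlog : log (1 + b * x) ≠ 0 := (log_pos (hgt x hx)).ne'
  simp only [Function.comp_apply, hline, smul_eq_mul, logb, add_sub_cancel_left]
  field_simp
end

section
/- Define g_tilde(x) = (a*b^2*x + 2*a*b) * ln(1 + b*x) - 2*a*b^2*x for x >= 0 with constants a, b > 0. Then g_tilde is convex on [0, infinity), its derivative vanishes at x = 0, and g_tilde(x) >= 0 for all x >= 0. -/
/-! With `u = 1 + b x`, the derivative of `g̃` is `a b² (log u + u⁻¹ - 1)`. Since `log u + u⁻¹` is
increasing for `u ≥ 1`, `g̃` is convex on `[0, ∞)`; as `g̃ 0 = 0` and `g̃' 0 = 0`, its tangent line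
at `0` is the zero function, and a convex function lies above its tangent lines. -/

open Real Set

lemma monotoneOn_log_add_inv : MonotoneOn (fun u : ℝ => log u + u⁻¹) (Ici 1) := by
  intro s (hs : 1 ≤ s) t (ht : 1 ≤ t) hst
  have hs0 : 0 < s := by linarith
  have ht0 : 0 < t := by linarith
  have hlog : 1 - s / t ≤ log t - log s := by
    rw [← log_div ht0.ne' hs0.ne']
    simpa using one_sub_inv_le_log_of_pos (div_pos ht0 hs0)
  have hinv : s⁻¹ - t⁻¹ ≤ 1 - s / t := by
    have : s⁻¹ - t⁻¹ = (1 - s / t) * s⁻¹ := by field_simp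
    rw [this]
    exact mul_le_of_le_one_right (by rwa [sub_nonneg, div_le_one ht0]) (inv_le_one_of_one_le₀ hs)
  dsimp only
  linarith

lemma ConvexOn.le_of_hasDerivAt_zero {S : Set ℝ} {f : ℝ → ℝ} {x y : ℝ} (hf : ConvexOn ℝ S f)
    (hx : x ∈ S) (hy : y ∈ S) (hxy : x ≤ y) (hd : HasDerivAt f 0 x) : f x ≤ f y := by
  rcases hxy.eq_or_lt with rfl | hlt
  · rfl
  have := hf.le_slope_of_hasDerivAt hx hy hlt hd
  rw [slope_def_field, div_nonneg_iff] at this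
  rcases this with ⟨h, -⟩ | ⟨-, h⟩ <;> linarith

noncomputable def gtilde (a b : ℝ) : ℝ → ℝ :=
  fun x => (a * b ^ 2 * x + 2 * a * b) * log (1 + b * x) - 2 * a * b ^ 2 * x

lemma hasDerivAt_gtilde (a : ℝ) {b x : ℝ} (hx : 1 + b * x ≠ 0) :
    HasDerivAt (gtilde a b) (a * b ^ 2 * (log (1 + b * x) + (1 + b * x)⁻¹ - 1)) x := by
  have hlin : HasDerivAt (fun x => 1 + b * x) b x := by
    simpa using ((hasDerivAt_id x).const_mul b).const_add 1
  have h : HasDerivAt (gtilde a b) (a * b ^ 2 * 1 * log (1 + b * x)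
      + (a * b ^ 2 * x + 2 * a * b) * (b / (1 + b * x)) - 2 * a * b ^ 2 * 1) x :=
    (((hasDerivAt_id x).const_mul (a * b ^ 2)).add_const (2 * a * b)).mul (hlin.log hx)
      |>.sub ((hasDerivAt_id x).const_mul (2 * a * b ^ 2))
  convert h using 1
  field_simp
  ring

lemma convexOn_gtilde {a b : ℝ} (ha : 0 ≤ a) (hb : 0 ≤ b) : ConvexOn ℝ (Ici 0) (gtilde a b) := by
  have hone : ∀ x ∈ Ici (0 : ℝ), 1 ≤ 1 + b * x := fun x (hx : 0 ≤ x) => by nlinarith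
  have hderiv : ∀ x ∈ Ici (0 : ℝ), HasDerivAt (gtilde a b)
      (a * b ^ 2 * (log (1 + b * x) + (1 + b * x)⁻¹ - 1)) x :=
    fun x hx => hasDerivAt_gtilde a (by linarith [hone x hx])
  refine MonotoneOn.convexOn_of_deriv (convex_Ici 0)
    (fun x hx => (hderiv x hx).continuousAt.continuousWithinAt)
    (fun x hx => (hderiv x (interior_subset hx)).differentiableAt.differentiableWithinAt) ?_
  intro x hx y hy hxy
  rw [(hderiv x (interior_subset hx)).deriv, (hderiv y (interior_subset hy)).deriv]
  have := monotoneOn_log_add_inv (hone x (interior_subset hx)) (hone y (interior_subset hy))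
    (by gcongr)
  dsimp only at this
  gcongr ?_ * (?_ - 1)

/-- `g̃(x) = (a b² x + 2 a b) ln(1 + b x) - 2 a b² x` is convex on `[0, ∞)`,
has vanishing derivative at `0`, and is nonnegative on `[0, ∞)`. -/
theorem gtilde_convex_nonneg (a b : ℝ) (ha : 0 < a) (hb : 0 < b) :
    ConvexOn ℝ (Set.Ici (0 : ℝ))
      (fun x => (a * b ^ 2 * x + 2 * a * b) * Real.log (1 + b * x) - 2 * a * b ^ 2 * x) ∧
    deriv (fun x => (a * b ^ 2 * x + 2 * a * b) * Real.log (1 + b * x) - 2 * a * b ^ 2 * x) 0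
      = 0 ∧
    ∀ x : ℝ, 0 ≤ x →
      0 ≤ (a * b ^ 2 * x + 2 * a * b) * Real.log (1 + b * x) - 2 * a * b ^ 2 * x := by
  have hconv : ConvexOn ℝ (Ici 0) (gtilde a b) := convexOn_gtilde ha.le hb.le
  have hderiv_zero : HasDerivAt (gtilde a b) 0 0 := by
    simpa using hasDerivAt_gtilde a (b := b) (x := 0) (by simp)
  have hzero : gtilde a b 0 = 0 := by simp [gtilde]
  refine ⟨hconv, hderiv_zero.deriv, fun x hx => ?_⟩
  have := hconv.le_of_hasDerivAt_zero self_mem_Ici hx hx hderiv_zero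
  rwa [hzero] at this
end

section
/- For gamma > 0, the function Psi(gamma) = gamma * (2^{1/gamma} - 1) = gamma * (e^{ln(2)/gamma} - 1) is convex on (0, infinity). -/
/-! Ψ is the perspective `γ ↦ γ g(1/γ)` of the convex function `g t = 2^t - 1`, and perspectives
of convex functions are convex: with `z = a x + b y`, the point `1/z` is the convex combination
of `1/x` and `1/y` with weights `a x / z` and `b y / z`. -/

open Set

theorem inv_add_eq_mul_inv_add_mul_inv {x y a b : ℝ} (hx : x ≠ 0) (hy : y ≠ 0)
    (hab : a + b = 1) (hz : a * x + b * y ≠ 0) :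
    (a * x + b * y)⁻¹ =
      a * x / (a * x + b * y) * x⁻¹ + b * y / (a * x + b * y) * y⁻¹ := by
  field_simp
  exact hab.symm

theorem ConvexOn.mul_comp_inv {s : Set ℝ} {g : ℝ → ℝ} (hg : ConvexOn ℝ s g) :
    ConvexOn ℝ {x | 0 < x ∧ x⁻¹ ∈ s} (fun x => x * g x⁻¹) := by
  have weights : ∀ ⦃x y a b : ℝ⦄, 0 < x → 0 < y → 0 ≤ a → 0 ≤ b → a + b = 1 →
      0 < a * x + b * y ∧ 0 ≤ a * x / (a * x + b * y) ∧ 0 ≤ b * y / (a * x + b * y) ∧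
        a * x / (a * x + b * y) + b * y / (a * x + b * y) = 1 := by
    intro x y a b hx hy ha hb hab
    have hz : 0 < a * x + b * y := convex_Ioi (0 : ℝ) hx hy ha hb hab
    exact ⟨hz, by positivity, by positivity, by field_simp⟩
  refine ⟨?_, ?_⟩ <;> rintro x ⟨hx, hxs⟩ y ⟨hy, hys⟩ a b ha hb hab <;>
    obtain ⟨hz, hα, hβ, hαβ⟩ := weights hx hy ha hb hab <;>
    simp only [smul_eq_mul, mem_ofPred_eq,
      inv_add_eq_mul_inv_add_mul_inv hx.ne' hy.ne' hab hz.ne']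
  · exact ⟨hz, hg.1 hxs hys hα hβ hαβ⟩
  · set z := a * x + b * y
    calc z * g (a * x / z * x⁻¹ + b * y / z * y⁻¹)
        ≤ z * (a * x / z * g x⁻¹ + b * y / z * g y⁻¹) :=
          mul_le_mul_of_nonneg_left (hg.2 hxs hys hα hβ hαβ) hz.le
      _ = a * (x * g x⁻¹) + b * (y * g y⁻¹) := by field_simp

/-- `Ψ(γ) = γ (e^{ln 2 / γ} - 1)` is convex on `(0, ∞)`. -/
theorem psi_convex :
    ConvexOn ℝ (Set.Ioi (0 : ℝ))
      (fun γ => γ * (Real.exp (Real.log 2 / γ) - 1)) := by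
  have hg : ConvexOn ℝ univ (fun t : ℝ => (2 : ℝ) ^ t - 1) :=
    (convexOn_rpow_left two_pos).add_const (-1) |>.congr fun t _ => (sub_eq_add_neg _ _).symm
  have hdom : {x : ℝ | 0 < x ∧ x⁻¹ ∈ univ} = Ioi 0 := by ext; simp
  refine (hdom ▸ hg.mul_comp_inv).congr fun γ _ => ?_
  simp only [Real.rpow_def_of_pos two_pos, div_eq_mul_inv]
end
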